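/- arXiv:2001.00376 — 3 statements merged into one kernel-verified Lean document; each statement's English description precedes it below -/
import Mathlib

section
/- Every subspace A of the metric space ℕ (with the euclidean metric) admits tilings of arbitrary invariance: for every R > 0 and ε > 0 there exists a partition of A into finite sets, each of which is an (R, ε)-Følner set in A, with uniformly bounded diameters. -/
/-!
Put `r = ⌈R⌉` and call `t` *clean* if no point of `A` lies within distance `r` of `t`.
The tiles are `A ∩ [tⱼ, tⱼ₊₁)` for cut points `t₀ = 0 ≤ t₁ ≤ ⋯`, where `tⱼ₊₁` lies in the
window `[2jW, 2(j+1)W)` with `W = n(2r+1)`, so tiles have diameter `< 4W`. Points of `A`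
outside a tile but within distance `R` of it lie within `r` of a non-clean end of the tile,
so there are at most `2r` of them, and none if both ends are clean (or the left end is `0`).
Each `tⱼ₊₁` is clean whenever its window contains a clean point. Otherwise each of the
`2n` consecutive intervals of length `2r+1` in the window meets `A`; cutting at the middle of
the window then leaves at least `n > 2r/ε` points of `A` in both adjacent tiles.
-/

open Set

namespace NatTiling

def IsClean (A : Set ℕ) (r t : ℕ) : Prop := ∀ a ∈ A, a + r < t ∨ t + r < a

/-- The outer boundary `∂_R^+ B` of `B`, taken inside the subspace `A`. -/
def outerBoundary (A B : Set ℕ) (R : ℝ) : Set ℕ :=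
  {a | a ∈ A ∧ a ∉ B ∧ ∃ b ∈ B, |(a : ℝ) - (b : ℝ)| ≤ R}

def blocks (A : Set ℕ) (t : ℕ → ℕ) : Set (Set ℕ) :=
  {B | B.Nonempty ∧ ∃ j, B = A ∩ Ico (t j) (t (j + 1))}

section Tiles

variable {A : Set ℕ} {r u v : ℕ}

lemma not_isClean_of_nonempty_left (h : (A ∩ Ico (u - r) u).Nonempty) : ¬IsClean A r u := by
  intro hu
  obtain ⟨a, ha, hau⟩ := h
  have := hu a ha
  simp only [mem_Ico] at hau
  omega

lemma not_isClean_of_nonempty_right (h : (A ∩ Ico v (v + r)).Nonempty) : ¬IsClean A r v := by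
  intro hv
  obtain ⟨a, ha, hav⟩ := h
  have := hv a ha
  simp only [mem_Ico] at hav
  omega

lemma outerBoundary_inter_Ico_subset {R : ℝ} (hR : R ≤ r) :
    outerBoundary A (A ∩ Ico u v) R ⊆ A ∩ Ico (u - r) u ∪ A ∩ Ico v (v + r) := by
  rintro a ⟨ha, hab, b, ⟨-, hbu, hbv⟩, hdist⟩
  rw [abs_sub_le_iff] at hdist
  have hclose : a ≤ b + r ∧ b ≤ a + r := by
    constructor
    · exact_mod_cast (by linarith : (a : ℝ) ≤ b + r)
    · exact_mod_cast (by linarith : (b : ℝ) ≤ a + r)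
  have houtside : a < u ∨ v ≤ a := by
    by_contra! h
    exact hab ⟨ha, h⟩
  simp only [mem_union, mem_inter_iff, mem_Ico, ha, true_and]
  omega

lemma ncard_outerBoundary_lt {R ε : ℝ} (hε : 0 < ε) (hR : R ≤ r)
    (hB : (A ∩ Ico u v).Nonempty)
    (hlarge : (A ∩ Ico (u - r) u).Nonempty ∨ (A ∩ Ico v (v + r)).Nonempty →
      2 * r < ε * (A ∩ Ico u v).ncard) :
    (outerBoundary A (A ∩ Ico u v) R).ncard < ε * (A ∩ Ico u v).ncard := by
  have hsub := outerBoundary_inter_Ico_subset (A := A) (u := u) (v := v) hR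
  have hfin : (A ∩ Ico (u - r) u ∪ A ∩ Ico v (v + r)).Finite :=
    ((finite_Ico _ _).inter_of_right A).union ((finite_Ico _ _).inter_of_right A)
  by_cases hends : (A ∩ Ico (u - r) u).Nonempty ∨ (A ∩ Ico v (v + r)).Nonempty
  · refine lt_of_le_of_lt ?_ (hlarge hends)
    have hcard : (A ∩ Ico (u - r) u ∪ A ∩ Ico v (v + r)).ncard ≤ 2 * r :=
      calc _ ≤ (A ∩ Ico (u - r) u).ncard + (A ∩ Ico v (v + r)).ncard := ncard_union_le _ _
        _ ≤ (Ico (u - r) u).ncard + (Ico v (v + r)).ncard :=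
          add_le_add (ncard_le_ncard inter_subset_right (finite_Ico _ _))
            (ncard_le_ncard inter_subset_right (finite_Ico _ _))
        _ ≤ 2 * r := by simp only [ncard_Ico_nat, add_tsub_cancel_left]; omega
    exact_mod_cast (ncard_le_ncard hsub hfin).trans hcard
  · rw [not_or, not_nonempty_iff_eq_empty, not_nonempty_iff_eq_empty] at hends
    rw [hends.1, hends.2, empty_union, subset_empty_iff] at hsub
    rw [hsub, ncard_empty, Nat.cast_zero]
    exact mul_pos hε (by exact_mod_cast (ncard_pos ((finite_Ico _ _).inter_of_right A)).2 hB)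

/-- If no point of `[u, u + n(2r+1))` is clean, each of its `n` subintervals of length
`2r+1` contains a point of `A` (one within `r` of its centre). -/
lemma le_ncard_inter_Ico_of_forall_not_isClean {n : ℕ}
    (h : ∀ t ∈ Ico u (u + n * (2 * r + 1)), ¬IsClean A r t) :
    n ≤ (A ∩ Ico u (u + n * (2 * r + 1))).ncard := by
  induction n with
  | zero => simp
  | succ n ih =>
    have hsucc : u + (n + 1) * (2 * r + 1) = u + n * (2 * r + 1) + (2 * r + 1) := by ring
    have hcentre := h (u + n * (2 * r + 1) + r) (by simp only [mem_Ico, hsucc]; omega)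
    simp only [IsClean, not_forall, not_or, not_lt, exists_prop] at hcentre
    obtain ⟨a, ha, ha_ge, ha_le⟩ := hcentre
    have hprev := ih fun t ht => h t (Ico_subset_Ico_right (by rw [hsucc]; omega) ht)
    calc n + 1 ≤ (insert a (A ∩ Ico u (u + n * (2 * r + 1)))).ncard := by
          have hnew : a ∉ A ∩ Ico u (u + n * (2 * r + 1)) := fun ha' => by
            simp only [mem_inter_iff, mem_Ico] at ha'
            omega
          rw [ncard_insert_of_notMem hnew ((finite_Ico _ _).inter_of_right A)]
          omega
      _ ≤ _ := by
          refine ncard_le_ncard (insert_subset ⟨ha, ?_⟩ ?_) ((finite_Ico _ _).inter_of_right A)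
          · simp only [mem_Ico, hsucc]; omega
          · exact inter_subset_inter_right _ (Ico_subset_Ico_right (by rw [hsucc]; omega))

end Tiles

open Classical in
noncomputable def windowCut (A : Set ℕ) (r u W : ℕ) : ℕ :=
  if h : ∃ t ∈ Ico u (u + 2 * W), IsClean A r t then h.choose else u + W

noncomputable def cutPoint (A : Set ℕ) (r W : ℕ) : ℕ → ℕ
  | 0 => 0
  | j + 1 => windowCut A r (j * (2 * W)) W

section Cuts

variable {A : Set ℕ} {r u W : ℕ}

lemma cutPoint_zero : cutPoint A r W 0 = 0 := rfl

lemma cutPoint_succ (j : ℕ) : cutPoint A r W (j + 1) = windowCut A r (j * (2 * W)) W := rfl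

lemma windowCut_mem (hW : 0 < W) : windowCut A r u W ∈ Ico u (u + 2 * W) := by
  unfold windowCut
  split_ifs with h
  · exact h.choose_spec.1
  · simp only [mem_Ico]; omega

lemma windowCut_dense {n : ℕ} (hW : W = n * (2 * r + 1))
    (h : ¬IsClean A r (windowCut A r u W)) :
    windowCut A r u W = u + W ∧ n ≤ (A ∩ Ico u (u + W)).ncard ∧
      n ≤ (A ∩ Ico (u + W) (u + W + W)).ncard := by
  unfold windowCut at h ⊢
  split_ifs at h ⊢ with hclean
  · exact absurd hclean.choose_spec.2 h
  · push Not at hclean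
    subst hW
    refine ⟨rfl, le_ncard_inter_Ico_of_forall_not_isClean fun t ht => hclean t ?_,
      le_ncard_inter_Ico_of_forall_not_isClean fun t ht => hclean t ?_⟩
    all_goals simp only [mem_Ico] at ht ⊢; omega

lemma cutPoint_succ_mem (hW : 0 < W) (j : ℕ) :
    cutPoint A r W (j + 1) ∈ Ico (j * (2 * W)) ((j + 1) * (2 * W)) := by
  rw [add_one_mul]
  exact windowCut_mem hW

lemma cutPoint_le_mul (hW : 0 < W) (j : ℕ) : cutPoint A r W j ≤ j * (2 * W) := by
  cases j with
  | zero => simp [cutPoint_zero]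
  | succ j => exact (cutPoint_succ_mem hW j).2.le

lemma cutPoint_monotone (hW : 0 < W) : Monotone (cutPoint A r W) :=
  monotone_nat_of_le_succ fun j => (cutPoint_le_mul hW j).trans (cutPoint_succ_mem hW j).1

lemma cutPoint_succ_le (hW : 0 < W) (j : ℕ) :
    cutPoint A r W (j + 1) ≤ cutPoint A r W j + 4 * W := by
  have hnext := (cutPoint_succ_mem (A := A) (r := r) hW j).2
  cases j with
  | zero => rw [cutPoint_zero]; omega
  | succ j =>
    have hprev := (cutPoint_succ_mem (A := A) (r := r) hW j).1
    have hperiod : (j + 1 + 1) * (2 * W) = j * (2 * W) + 4 * W := by ring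
    omega

lemma not_bddAbove_range_cutPoint (hW : 0 < W) : ¬BddAbove (range (cutPoint A r W)) := by
  rw [not_bddAbove_iff]
  intro x
  refine ⟨_, mem_range_self (x + 2), lt_of_lt_of_le ?_ (cutPoint_succ_mem hW (x + 1)).1⟩
  nlinarith

lemma le_ncard_block {n : ℕ} (hW : W = n * (2 * r + 1)) (hn : 0 < n) {j : ℕ}
    (h : (A ∩ Ico (cutPoint A r W j - r) (cutPoint A r W j)).Nonempty ∨
      (A ∩ Ico (cutPoint A r W (j + 1)) (cutPoint A r W (j + 1) + r)).Nonempty) :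
    n ≤ (A ∩ Ico (cutPoint A r W j) (cutPoint A r W (j + 1))).ncard := by
  have hW0 : 0 < W := by rw [hW]; positivity
  have hfin := (finite_Ico (cutPoint A r W j) (cutPoint A r W (j + 1))).inter_of_right A
  rcases h with hleft | hright
  · cases j with
    | zero => simp [cutPoint] at hleft
    | succ i =>
      rw [cutPoint_succ] at hleft
      obtain ⟨hcut, -, hdense⟩ := windowCut_dense hW (not_isClean_of_nonempty_left hleft)
      refine hdense.trans (ncard_le_ncard (inter_subset_inter_right _ ?_) hfin)
      have hnext := (cutPoint_succ_mem (A := A) (r := r) hW0 (i + 1)).1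
      rw [add_one_mul] at hnext
      exact Ico_subset_Ico (by rw [cutPoint_succ, hcut]) (by omega)
  · rw [cutPoint_succ] at hright
    obtain ⟨hcut, hdense, -⟩ := windowCut_dense hW (not_isClean_of_nonempty_right hright)
    refine hdense.trans (ncard_le_ncard (inter_subset_inter_right _ ?_) hfin)
    exact Ico_subset_Ico (cutPoint_le_mul hW0 j) (by rw [cutPoint_succ, hcut])

end Cuts

lemma existsUnique_mem_blocks {A : Set ℕ} {t : ℕ → ℕ} (ht : Monotone t) (h0 : t 0 = 0)
    (htop : ¬BddAbove (range t)) {a : ℕ} (ha : a ∈ A) : ∃! B, B ∈ blocks A t ∧ a ∈ B := by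
  have hcover := iUnion_Ico_map_succ_eq_Ici (f := t) (fun j => ht bot_le) htop
  obtain ⟨j, hj⟩ := mem_iUnion.1 (hcover ▸ (by simp [h0] : a ∈ Ici (t ⊥)))
  rw [Order.succ_eq_add_one] at hj
  refine ⟨A ∩ Ico (t j) (t (j + 1)), ⟨⟨⟨a, ha, hj⟩, j, rfl⟩, ha, hj⟩, ?_⟩
  rintro B ⟨⟨-, i, rfl⟩, hai⟩
  by_contra hne
  have hij : i ≠ j := by rintro rfl; exact hne rfl
  have := ht.pairwise_disjoint_on_Ico_succ hij
  simp only [Function.onFun, Order.succ_eq_add_one] at this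
  exact this.notMem_of_mem_left hai.2 hj

lemma abs_natCast_sub_le_of_mem_Ico {u v L x y : ℕ} (hL : v ≤ u + L)
    (hx : x ∈ Ico u v) (hy : y ∈ Ico u v) : |(x : ℝ) - y| ≤ L := by
  simp only [mem_Ico] at hx hy
  rw [abs_sub_le_iff, sub_le_iff_le_add, sub_le_iff_le_add]
  constructor <;> exact_mod_cast (by omega)

end NatTiling

open NatTiling in
/-- Every subspace `A ⊆ ℕ` (euclidean metric) admits tilings of arbitrary invariance:
for all `R, ε > 0` there is a partition of `A` into finite nonempty `(R,ε)`-Følner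
sets (boundaries taken inside `A`) with uniformly bounded diameters. -/
theorem stmt4 (A : Set ℕ) :
    ∀ R ε : ℝ, 0 < R → 0 < ε →
      ∃ (P : Set (Set ℕ)) (D : ℝ),
        (∀ a ∈ A, ∃! B : Set ℕ, B ∈ P ∧ a ∈ B) ∧
        (∀ B ∈ P, B ⊆ A ∧ B.Finite ∧ B.Nonempty ∧
          ({a : ℕ | a ∈ A ∧ a ∉ B ∧ ∃ b ∈ B, |(a : ℝ) - (b : ℝ)| ≤ R}).ncard
              < ε * B.ncard ∧
          (∀ x ∈ B, ∀ y ∈ B, |(x : ℝ) - (y : ℝ)| ≤ D)) := by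
  intro R ε _ hε
  set r := ⌈R⌉₊
  set n := ⌈2 * r / ε⌉₊ + 1
  set W := n * (2 * r + 1)
  have hW : 0 < W := by positivity
  have hn : (2 * r : ℝ) < ε * n := by
    have := (div_le_iff₀' hε).1 (Nat.le_ceil (2 * r / ε))
    push_cast [n]
    linarith
  refine ⟨blocks A (cutPoint A r W), ((4 * W : ℕ) : ℝ),
    fun a ha => existsUnique_mem_blocks (cutPoint_monotone hW) rfl
      (not_bddAbove_range_cutPoint hW) ha, ?_⟩
  rintro B ⟨hne, j, rfl⟩
  refine ⟨inter_subset_left, (finite_Ico _ _).inter_of_right A, hne,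
    ncard_outerBoundary_lt hε (Nat.le_ceil R) hne fun hends => ?_,
    fun x hx y hy => abs_natCast_sub_le_of_mem_Ico (cutPoint_succ_le hW j) hx.2 hy.2⟩
  exact hn.trans_le (by gcongr; exact le_ncard_block rfl (Nat.succ_pos _) hends)
end

section
/- Let S be a preordered commutative monoid (with the algebraic preorder) in which every element x satisfies 2x ≤ x (i.e., every element is properly infinite). Then S is almost unperforated. -/
/-!
If `2y ≤ y` then induction gives `(k + 1)y ≤ y` for every `k`. So `(n + 1)x ≤ ny` with `n ≥ 1`
yields `x ≤ (n + 1)x ≤ ny ≤ y`; for `n = 0` it says `x ≤ 0`, and `0 ≤ y` always.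
-/

namespace AddCommMonoid

variable {S : Type*} [AddCommMonoid S]

def AlgebraicLE (x y : S) : Prop := ∃ z, x + z = y

local infix:50 " ≼ " => AlgebraicLE

theorem algebraicLE_refl (x : S) : x ≼ x := ⟨0, add_zero x⟩

theorem AlgebraicLE.trans {x y w : S} : x ≼ y → y ≼ w → x ≼ w := by
  rintro ⟨a, rfl⟩ ⟨b, rfl⟩
  exact ⟨a + b, (add_assoc x a b).symm⟩

theorem zero_algebraicLE (x : S) : (0 : S) ≼ x := ⟨x, zero_add x⟩

theorem algebraicLE_add_right (x z : S) : x ≼ x + z := ⟨z, rfl⟩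

theorem AlgebraicLE.add_right {x y : S} (hxy : x ≼ y) (c : S) : x + c ≼ y + c := by
  obtain ⟨z, rfl⟩ := hxy
  exact ⟨z, add_right_comm x c z⟩

theorem self_algebraicLE_succ_nsmul (x : S) (n : ℕ) : x ≼ (n + 1) • x := by
  rw [succ_nsmul']
  exact algebraicLE_add_right x _

theorem succ_nsmul_algebraicLE_self {y : S} (hy : 2 • y ≼ y) (k : ℕ) : (k + 1) • y ≼ y := by
  induction k with
  | zero => simpa using algebraicLE_refl y
  | succ k ih =>
    rw [succ_nsmul]
    refine AlgebraicLE.trans ?_ hy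
    simpa [two_nsmul] using ih.add_right y

end AddCommMonoid

/-- If every element of a commutative monoid `S` is properly infinite (`2x ≤ x` in
the algebraic preorder), then `S` is almost unperforated. -/
theorem stmt6 (S : Type*) [AddCommMonoid S]
    (h : ∀ x : S, ∃ z : S, 2 • x + z = x) :
    ∀ (x y : S) (n : ℕ), (∃ z : S, (n + 1) • x + z = n • y) →
      ∃ z : S, x + z = y := by
  intro x y n hxy
  change AddCommMonoid.AlgebraicLE x y
  cases n with
  | zero =>
    obtain ⟨z, hz⟩ := hxy
    refine AddCommMonoid.AlgebraicLE.trans ⟨z, ?_⟩ (AddCommMonoid.zero_algebraicLE y)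
    simpa using hz
  | succ k =>
    exact (AddCommMonoid.self_algebraicLE_succ_nsmul x (k + 1)).trans <|
      AddCommMonoid.AlgebraicLE.trans hxy (AddCommMonoid.succ_nsmul_algebraicLE_self (h y) k)
end

section
/- Let ρ be a [0,∞]-valued function on open subsets of a topological space X that is inner regular with respect to compact open subsets (ρ(V) = sup{ρ(K) : K ⊆ V compact open}) and finitely additive on disjoint compact open sets, with ρ(K' ⊔ K'') = ρ(K') + ρ(K'') and ρ defined on compact open sets. If K is a compact open subset of an open set V, then ρ(V) = ρ(K) + ρ(V \ K). -/
/-!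
A compact open `K` is also closed, so every compact open `L ⊆ V` splits into the compact open
pieces `L ∩ K` and `L \ K`, giving `ρ L ≤ ρ K + ρ (V \ K)`; conversely every compact open
`L ⊆ V \ K` is disjoint from `K` and `K ∪ L` is a compact open subset of `V`, giving
`ρ K + ρ L ≤ ρ V`. Taking suprema over `L` yields the two inequalities.
-/

open scoped ENNReal

section InnerRegular

variable {X : Type*} [TopologicalSpace X] {ρ : Set X → ℝ≥0∞}

theorem le_of_isCompact_isOpen_subset
    (hinner : ∀ V : Set X, IsOpen V →
      ρ V = ⨆ (K : Set X) (_ : IsCompact K ∧ IsOpen K ∧ K ⊆ V), ρ K)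
    {V L : Set X} (hV : IsOpen V) (hL : IsCompact L) (hLo : IsOpen L) (hLV : L ⊆ V) :
    ρ L ≤ ρ V := by
  rw [hinner V hV]
  exact le_iSup₂_of_le (f := fun s (_ : IsCompact s ∧ IsOpen s ∧ s ⊆ V) => ρ s)
    L ⟨hL, hLo, hLV⟩ le_rfl

theorem le_add_diff_of_isCompact_isOpen [T2Space X]
    (hinner : ∀ V : Set X, IsOpen V →
      ρ V = ⨆ (K : Set X) (_ : IsCompact K ∧ IsOpen K ∧ K ⊆ V), ρ K)
    (hadd : ∀ K₁ K₂ : Set X, IsCompact K₁ → IsOpen K₁ → IsCompact K₂ → IsOpen K₂ →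
      Disjoint K₁ K₂ → ρ (K₁ ∪ K₂) = ρ K₁ + ρ K₂)
    {V K : Set X} (hV : IsOpen V) (hK : IsCompact K) (hKo : IsOpen K) :
    ρ V ≤ ρ K + ρ (V \ K) := by
  rw [hinner V hV]
  refine iSup₂_le fun L ⟨hL, hLo, hLV⟩ => ?_
  have hLK : IsCompact (L ∩ K) := hL.inter_right hK.isClosed
  have hLdK : IsCompact (L \ K) := hL.diff hKo
  calc ρ L = ρ (L ∩ K) + ρ (L \ K) := by
        rw [← hadd _ _ hLK (hLo.inter hKo) hLdK (hLo.sdiff hK.isClosed)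
          Set.disjoint_sdiff_inter.symm, Set.inter_union_sdiff]
    _ ≤ ρ K + ρ (V \ K) := by
        gcongr
        · exact le_of_isCompact_isOpen_subset hinner hKo hLK (hLo.inter hKo)
            Set.inter_subset_right
        · exact le_of_isCompact_isOpen_subset hinner (hV.sdiff hK.isClosed) hLdK
            (hLo.sdiff hK.isClosed) (Set.sdiff_subset_sdiff_left hLV)

theorem add_diff_le_of_isCompact_isOpen [T2Space X]
    (hinner : ∀ V : Set X, IsOpen V →
      ρ V = ⨆ (K : Set X) (_ : IsCompact K ∧ IsOpen K ∧ K ⊆ V), ρ K)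
    (hadd : ∀ K₁ K₂ : Set X, IsCompact K₁ → IsOpen K₁ → IsCompact K₂ → IsOpen K₂ →
      Disjoint K₁ K₂ → ρ (K₁ ∪ K₂) = ρ K₁ + ρ K₂)
    {V K : Set X} (hV : IsOpen V) (hK : IsCompact K) (hKo : IsOpen K) (hKV : K ⊆ V) :
    ρ K + ρ (V \ K) ≤ ρ V := by
  rw [hinner (V \ K) (hV.sdiff hK.isClosed),
    ENNReal.add_biSup' ⟨∅, isCompact_empty, isOpen_empty, Set.empty_subset _⟩]
  refine iSup₂_le fun L ⟨hL, hLo, hLVK⟩ => ?_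
  have hKL : Disjoint K L := Set.disjoint_left.2 fun _ hxK hxL => (hLVK hxL).2 hxK
  rw [← hadd _ _ hK hKo hL hLo hKL]
  exact le_of_isCompact_isOpen_subset hinner hV (hK.union hL) (hKo.union hLo)
    (Set.union_subset hKV (hLVK.trans Set.sdiff_subset))

end InnerRegular

/-- Let `ρ` be a `[0,∞]`-valued set function, inner regular on open sets with respect
to compact open subsets and finitely additive on disjoint compact open sets. If `K`
is a compact open subset of an open set `V`, then `ρ(V) = ρ(K) + ρ(V \ K)`. -/
theorem stmt14 (X : Type*) [TopologicalSpace X] [T2Space X]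
    (ρ : Set X → ℝ≥0∞)
    (hinner : ∀ V : Set X, IsOpen V →
      ρ V = ⨆ (K : Set X) (_ : IsCompact K ∧ IsOpen K ∧ K ⊆ V), ρ K)
    (hadd : ∀ K₁ K₂ : Set X, IsCompact K₁ → IsOpen K₁ → IsCompact K₂ → IsOpen K₂ →
      Disjoint K₁ K₂ → ρ (K₁ ∪ K₂) = ρ K₁ + ρ K₂)
    (V K : Set X) (hV : IsOpen V)
    (hK : IsCompact K) (hKo : IsOpen K) (hKV : K ⊆ V) :
    ρ V = ρ K + ρ (V \ K) :=
  le_antisymm (le_add_diff_of_isCompact_isOpen hinner hadd hV hK hKo)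
    (add_diff_le_of_isCompact_isOpen hinner hadd hV hK hKo hKV)
end
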